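/- Let r > 0, c_r = π/(2√r), and η > 0. Let m be a nonnegative integer with m − 1 < η² < m + 1, and set t_r = tanh(2c_r)/2. Then −∫_m^{m+1} G_η(u) du ≥ −(1/2)·log(m + 1) + log(t_r/4) − 3/2, where G_η(u) = −log|tanh(c_r(√u − η))|. -/

import Mathlib

/-!
Write `x = √u - η`, so that `|x| (√u + η) = |u - η²|`. Concavity of `tanh` on `[0, ∞)`
gives `|tanh (c x)| ≥ t_r |x|` for `|x| ≤ 2`, hence on `[m, m + 1]` the integrand is at most
`-log t_r + log (2 √(m + 1)) - log |u - η²|`. The integral of `-log |t|` over a unit interval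
`[p, p + 1]` with `p ≤ 1` is at most `1 + log 2`; when `p < 0 < p + 1` this is the bound
`log 2` on the binary entropy, i.e. Jensen's inequality for `x log x`.
-/

open Real intervalIntegral MeasureTheory Set

lemma ConcaveOn.mul_apply_le_apply_mul {f : ℝ → ℝ} (hf : ConcaveOn ℝ (Ici 0) f)
    (h0 : f 0 = 0) {t x : ℝ} (ht0 : 0 ≤ t) (ht1 : t ≤ 1) (hx : 0 ≤ x) :
    t * f x ≤ f (t * x) := by
  simpa [h0] using
    hf.2 (mem_Ici.2 le_rfl) (mem_Ici.2 hx) (sub_nonneg.2 ht1) ht0 (sub_add_cancel 1 t)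

namespace Real

lemma tanh_pos {x : ℝ} (hx : 0 < x) : 0 < tanh x := by
  rw [tanh_eq_sinh_div_cosh]
  exact div_pos (sinh_pos_iff.2 hx) (cosh_pos x)

lemma tanh_nonneg {x : ℝ} (hx : 0 ≤ x) : 0 ≤ tanh x := by
  rw [tanh_eq_sinh_div_cosh]
  exact div_nonneg (sinh_nonneg_iff.2 hx) (cosh_pos x).le

lemma abs_tanh (x : ℝ) : |tanh x| = tanh |x| := by
  rcases le_total 0 x with hx | hx
  · rw [abs_of_nonneg hx, abs_of_nonneg (tanh_nonneg hx)]
  · have h := tanh_nonneg (neg_nonneg.2 hx)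
    rw [tanh_neg] at h
    rw [abs_of_nonpos hx, tanh_neg, abs_of_nonpos (by linarith)]

lemma hasDerivAt_tanh (x : ℝ) : HasDerivAt tanh (cosh x ^ 2)⁻¹ x := by
  have h := (hasDerivAt_sinh x).div (hasDerivAt_cosh x) (cosh_pos x).ne'
  rw [← sq, ← sq, cosh_sq_sub_sinh_sq, one_div] at h
  rwa [show tanh = sinh / cosh from funext tanh_eq_sinh_div_cosh]

lemma concaveOn_tanh : ConcaveOn ℝ (Ici 0) tanh := by
  have hderiv : deriv tanh = fun x ↦ (cosh x ^ 2)⁻¹ :=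
    funext fun x ↦ (hasDerivAt_tanh x).deriv
  refine AntitoneOn.concaveOn_of_deriv (convex_Ici 0)
    (fun x _ ↦ (hasDerivAt_tanh x).continuousAt.continuousWithinAt)
    (fun x _ ↦ (hasDerivAt_tanh x).differentiableAt.differentiableWithinAt) ?_
  rw [hderiv, interior_Ici]
  intro x hx y hy hxy
  have hcosh : cosh x ≤ cosh y := cosh_le_cosh.2 (by rwa [abs_of_pos hx, abs_of_pos hy])
  dsimp only
  gcongr

lemma mul_abs_le_abs_tanh {b x : ℝ} (hb : 0 < b) (hx : |x| ≤ b) :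
    tanh b / b * |x| ≤ |tanh x| := by
  have h := concaveOn_tanh.mul_apply_le_apply_mul tanh_zero (by positivity)
    ((div_le_one hb).2 hx) hb.le
  rw [div_mul_cancel₀ _ hb.ne'] at h
  rw [abs_tanh]
  linarith [show tanh b / b * |x| = |x| / b * tanh b by ring]

end Real

lemma neg_log_abs_tanh_nonneg (x : ℝ) : 0 ≤ -log |tanh x| :=
  neg_nonneg.2 (log_nonpos (abs_nonneg _) (abs_tanh_lt_one x).le)

lemma neg_log_abs_tanh_mul_le {c x : ℝ} (hc : 0 < c) (hx : |x| ≤ 2) :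
    -log |tanh (c * x)| ≤ -log (tanh (2 * c) / 2) - log |x| := by
  have htr0 : 0 < tanh (2 * c) / 2 := half_pos (tanh_pos (by linarith))
  rcases eq_or_ne x 0 with rfl | hx0
  · have htr1 : tanh (2 * c) / 2 ≤ 1 := by linarith [tanh_lt_one (2 * c)]
    simpa using log_nonpos htr0.le htr1
  have hbound : tanh (2 * c) / 2 * |x| ≤ |tanh (c * x)| := by
    have h := mul_abs_le_abs_tanh (x := c * x) (by linarith : 0 < 2 * c)
      (by rw [abs_mul, abs_of_pos hc]; nlinarith)
    rwa [abs_mul, abs_of_pos hc, show tanh (2 * c) / (2 * c) * (c * |x|)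
      = tanh (2 * c) / 2 * |x| by field_simp] at h
  have h := log_le_log (by positivity) hbound
  rw [log_mul htr0.ne' (abs_pos.2 hx0).ne'] at h
  linarith

lemma abs_sqrt_sub_mul_sqrt_add {u η : ℝ} (hu : 0 ≤ u) (hη : 0 ≤ η) :
    |√u - η| * (√u + η) = |u - η ^ 2| := by
  rw [← abs_of_nonneg (by positivity : 0 ≤ √u + η), ← abs_mul,
    show (√u - η) * (√u + η) = √u ^ 2 - η ^ 2 by ring, sq_sqrt hu]

lemma neg_log_abs_sqrt_sub_le {u η M : ℝ} (hu : 0 ≤ u) (hη : 0 ≤ η) (huM : u ≤ M)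
    (hηM : η ^ 2 ≤ M) (hM : 1 ≤ M) :
    -log |√u - η| ≤ log (2 * √M) - log (u - η ^ 2) := by
  have hsum : √u + η ≤ 2 * √M := by
    linarith [sqrt_le_sqrt huM, (le_sqrt hη (by linarith)).2 hηM]
  have hM2 : 1 ≤ 2 * √M := by linarith [one_le_sqrt.2 hM]
  rw [← log_abs (u - η ^ 2), ← abs_sqrt_sub_mul_sqrt_add hu hη]
  rcases eq_or_ne (√u - η) 0 with h | h
  · simpa [h] using log_nonneg hM2
  · have hpos : 0 < √u + η :=
      (add_nonneg (sqrt_nonneg u) hη).lt_of_ne fun h0 ↦ h (by linarith [sqrt_nonneg u])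
    rw [log_mul (abs_pos.2 h).ne' hpos.ne']
    linarith [log_le_log hpos hsum]

lemma neg_log_abs_tanh_sqrt_sub_le {c η u M : ℝ} (hc : 0 < c) (hη : 0 ≤ η) (hu : 0 ≤ u)
    (huM : u ≤ M) (hηM : η ^ 2 ≤ M) (hM : 1 ≤ M) (hu2 : |u - η ^ 2| ≤ 2) :
    -log |tanh (c * (√u - η))| ≤
      -log (tanh (2 * c) / 2) + log (2 * √M) - log (u - η ^ 2) := by
  have hx : |√u - η| ≤ 2 := by
    have hfactor := abs_sqrt_sub_mul_sqrt_add hu hη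
    have hle : |√u - η| ≤ √u + η :=
      abs_sub_le_iff.2 ⟨by linarith, by linarith [sqrt_nonneg u]⟩
    nlinarith [abs_nonneg (√u - η)]
  linarith [neg_log_abs_tanh_mul_le hc hx, neg_log_abs_sqrt_sub_le hu hη huM hηM hM]

lemma integral_neg_log_le {p : ℝ} (hp : p ≤ 1) :
    ∫ t in p..p + 1, -log t ≤ 1 + log 2 := by
  rw [intervalIntegral.integral_neg, integral_log]
  rcases le_total 0 p with h | h
  · have h1 : p * log p ≤ 0 := mul_nonpos_of_nonneg_of_nonpos h (log_nonpos h hp)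
    have h2 : 0 ≤ (p + 1) * log (p + 1) := mul_nonneg (by linarith) (log_nonneg (by linarith))
    linarith [log_nonneg one_le_two]
  · have h := binEntropy_le_log_two (p := -p)
    rw [binEntropy, log_inv, log_inv, log_neg_eq_log, show 1 - -p = p + 1 by ring] at h
    linarith

lemma integral_neg_log_sub_le {a b : ℝ} (h : b ≤ a + 1) :
    ∫ u in b..b + 1, -log (u - a) ≤ 1 + log 2 := by
  rw [integral_comp_sub_right (fun t ↦ -log t), show b + 1 - a = b - a + 1 by ring]
  exact integral_neg_log_le (by linarith)

lemma intervalIntegrable_log_sub (a b c : ℝ) :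
    IntervalIntegrable (fun u ↦ log (u - a)) volume b c := by
  simpa using (intervalIntegrable_log' (a := b - a) (b := c - a)).comp_sub_right a

lemma intervalIntegral.integral_mono_on_of_nonneg {f g : ℝ → ℝ} {a b : ℝ} (hab : a ≤ b)
    (hf : ∀ u, 0 ≤ f u) (hg : IntervalIntegrable g volume a b)
    (hfg : ∀ u ∈ Icc a b, f u ≤ g u) :
    ∫ u in a..b, f u ≤ ∫ u in a..b, g u := by
  rw [integral_of_le hab, integral_of_le hab]
  exact integral_mono_of_nonneg (ae_of_all _ hf) hg.1
    ((ae_restrict_mem measurableSet_Ioc).mono fun u hu ↦ hfg u (Ioc_subset_Icc_self hu))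

theorem stmt_11 (r : ℝ) (hr : 0 < r) (c : ℝ) (hc : c = Real.pi / (2 * Real.sqrt r))
    (η : ℝ) (hη : 0 < η) (m : ℕ)
    (h1 : (m : ℝ) - 1 < η ^ 2) (h2 : η ^ 2 < (m : ℝ) + 1)
    (tr : ℝ) (htr : tr = Real.tanh (2 * c) / 2) :
    -(1 / 2) * Real.log ((m : ℝ) + 1) + Real.log (tr / 4) - 3 / 2 ≤
      -∫ u in (m : ℝ)..((m : ℝ) + 1), -Real.log |Real.tanh (c * (Real.sqrt u - η))| := by
  have hc0 : 0 < c := hc ▸ div_pos pi_pos (by positivity)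
  have htr0 : 0 < tr := htr ▸ half_pos (tanh_pos (by linarith))
  set K := -log tr + log (2 * √((m : ℝ) + 1)) with hK
  have hbound : ∀ u ∈ Icc (m : ℝ) (m + 1),
      -log |tanh (c * (√u - η))| ≤ K + -log (u - η ^ 2) := fun u hu ↦ by
    have := htr ▸ neg_log_abs_tanh_sqrt_sub_le hc0 hη.le (m.cast_nonneg.trans hu.1) hu.2 h2.le
      (by linarith) (abs_le.2 ⟨by linarith [hu.1], by linarith [hu.2]⟩)
    linarith
  have hlog : IntervalIntegrable (fun u ↦ -log (u - η ^ 2)) volume m (m + 1) :=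
    (intervalIntegrable_log_sub _ _ _).neg
  have hint : ∫ u in (m : ℝ)..m + 1, -log |tanh (c * (√u - η))| ≤ K + (1 + log 2) :=
    calc _ ≤ ∫ u in (m : ℝ)..m + 1, K + -log (u - η ^ 2) :=
          integral_mono_on_of_nonneg (by linarith) (fun _ ↦ neg_log_abs_tanh_nonneg _)
            (intervalIntegrable_const.add hlog) hbound
      _ = K + ∫ u in (m : ℝ)..m + 1, -log (u - η ^ 2) := by
          rw [integral_add intervalIntegrable_const hlog]
          simp
      _ ≤ K + (1 + log 2) := by grw [integral_neg_log_sub_le (by linarith)]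
  have hK' : K = -log tr + log 2 + log ((m : ℝ) + 1) / 2 := by
    rw [hK, log_mul two_ne_zero (by positivity), log_sqrt (by linarith)]
    ring
  have hlog4 : log (tr / 4) = log tr - 2 * log 2 := by
    rw [log_div htr0.ne' four_ne_zero, show (4 : ℝ) = 2 ^ 2 by norm_num, log_pow]
    push_cast
    ring
  linarith
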